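/- arXiv:1210.7503 — 4 statements merged into one kernel-verified Lean document; each statement's English description precedes it below -/
import Mathlib

section
/- If X_1,...,X_n are drawn sequentially without replacement from a set of reals summing to 0, and a_1,...,a_n are random variables with each a_k measurable with respect to F_{k-1} = sigma(X_1,...,X_{k-1}), then the process M_k = W_k + ((a_1+...+a_k)/(n-k)) S_k, for 1 <= k <= n-1, is a martingale with respect to F_k, where W_k = a_1 X_1 + ... + a_k X_k and S_k = X_1+...+X_k. -/
open MeasureTheory Finset

noncomputable section

instance permMS (n : ℕ) : MeasurableSpace (Equiv.Perm (Fin n)) := ⊤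

instance permNE (n : ℕ) : Nonempty (Equiv.Perm (Fin n)) := ⟨1⟩

/-- uniform probability measure on the n! orderings: sampling without replacement. -/
def permMeasure (n : ℕ) : Measure (Equiv.Perm (Fin n)) :=
  (PMF.uniformOfFintype (Equiv.Perm (Fin n))).toMeasure

/-- `X n x i σ` : the `(i+1)`-st sample (0-based `i`) drawn without replacement. -/
def X (n : ℕ) (x : Fin n → ℝ) (i : ℕ) (σ : Equiv.Perm (Fin n)) : ℝ :=
  if h : i < n then x (σ ⟨i, h⟩) else 0

/-- partial sum `S_k = X_1 + ⋯ + X_k`. -/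
def S (n : ℕ) (x : Fin n → ℝ) (k : ℕ) (σ : Equiv.Perm (Fin n)) : ℝ :=
  ∑ i ∈ Finset.range k, X n x i σ

/-- partial sum of squares `T_k = X_1^2 + ⋯ + X_k^2`. -/
def T (n : ℕ) (x : Fin n → ℝ) (k : ℕ) (σ : Equiv.Perm (Fin n)) : ℝ :=
  ∑ i ∈ Finset.range k, (X n x i σ) ^ 2

/-- `F_k = σ(X_1, ..., X_k)`. -/
def F (n : ℕ) (x : Fin n → ℝ) (k : ℕ) : MeasurableSpace (Equiv.Perm (Fin n)) :=
  MeasurableSpace.comap (fun σ => fun i : Fin k => X n x i σ) inferInstance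

/-!
The increment `M_{k+1} - M_k` equals `c · ((n - k) X_{k+1} + S_k)` with `c` an
`F_k`-measurable coefficient, so everything reduces to `E[X_{k+1} | F_k] = -S_k / (n - k)`.
Given the first `k` draws, composing with the transposition of two later positions preserves
both the uniform measure and `F_k`, so all `n - k` remaining draws have the same conditional
mean; they sum to `-S_k` because the `x_i` sum to `0`.
-/

theorem Measurable.eq_of_comap_eq {α β γ : Type*} [MeasurableSpace β] [MeasurableSpace γ]
    [MeasurableSingletonClass γ] {f : α → β} {g : α → γ}
    (hg : Measurable[MeasurableSpace.comap f inferInstance] g) {a b : α} (h : f a = f b) :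
    g a = g b := by
  obtain ⟨t, -, ht⟩ := hg (measurableSet_singleton (g a))
  have hb : b ∈ f ⁻¹' t := by rw [Set.mem_preimage, ← h, ← Set.mem_preimage, ht]; rfl
  rw [ht] at hb
  exact hb.symm

theorem condExp_ae_eq_of_forall_integral_mul_sub {Ω : Type*} {m m₀ : MeasurableSpace Ω}
    [Finite Ω] [MeasurableSingletonClass Ω] (hm : m ≤ m₀) {μ : Measure Ω} [IsFiniteMeasure μ]
    {f g : Ω → ℝ} (hg : StronglyMeasurable[m] g)
    (h : ∀ φ : Ω → ℝ, Measurable[m] φ → ∫ ω, φ ω * (f ω - g ω) ∂μ = 0) :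
    μ[f|m] =ᵐ[μ] g := by
  refine (ae_eq_condExp_of_forall_setIntegral_eq hm .of_finite
    (fun _ _ _ => Integrable.of_finite.integrableOn) (fun s hs _ => ?_)
    hg.aestronglyMeasurable).symm
  have h₁ := h (s.indicator 1) (measurable_const.indicator hs)
  have h₂ : ∀ ω, s.indicator 1 ω * (f ω - g ω) = s.indicator (fun ω => f ω - g ω) ω := fun ω => by
    by_cases hω : ω ∈ s <;> simp [hω]
  rw [funext h₂, integral_indicator (hm s hs), integral_sub .of_finite .of_finite,
    sub_eq_zero] at h₁
  exact h₁.symm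

instance (n : ℕ) : IsProbabilityMeasure (permMeasure n) :=
  PMF.toMeasure.isProbabilityMeasure _

theorem integral_permMeasure {n : ℕ} (f : Equiv.Perm (Fin n) → ℝ) :
    ∫ σ, f σ ∂permMeasure n = (∑ σ, f σ) / Fintype.card (Equiv.Perm (Fin n)) := by
  rw [integral_fintype .of_finite, sum_div]
  refine sum_congr rfl fun σ _ => ?_
  rw [measureReal_def, permMeasure, PMF.toMeasure_apply_singleton _ _ (measurableSet_singleton σ),
    PMF.uniformOfFintype_apply, ENNReal.toReal_inv, ENNReal.toReal_natCast, smul_eq_mul,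
    inv_mul_eq_div]

section SamplingWithoutReplacement

variable {n : ℕ} {x : Fin n → ℝ}

theorem measurable_X_F {i k : ℕ} (hik : i < k) : Measurable[F n x k] (X n x i) :=
  (measurable_pi_apply (⟨i, hik⟩ : Fin k)).comp
    (Measurable.of_comap_le le_rfl : Measurable[F n x k] fun σ (j : Fin k) => X n x j σ)

theorem F_mono {j k : ℕ} (hjk : j ≤ k) : F n x j ≤ F n x k :=
  Measurable.comap_le <| @measurable_pi_lambda _ _ _ (F n x k) _ _ fun i =>
    measurable_X_F (i.2.trans_le hjk)

theorem measurable_S_F {k : ℕ} : Measurable[F n x k] (S n x k) :=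
  Finset.measurable_sum _ fun _ hi => measurable_X_F (mem_range.mp hi)

theorem S_self_eq_zero (hx : ∑ i, x i = 0) (σ : Equiv.Perm (Fin n)) : S n x n σ = 0 := by
  rw [S, ← Fin.sum_univ_eq_sum_range, ← hx, ← Equiv.sum_comp σ x]
  exact sum_congr rfl fun i _ => by simp [X]

theorem X_mul_swap_of_lt {i k j : ℕ} (hik : i < k) (hkj : k ≤ j) (hj : j < n)
    (σ : Equiv.Perm (Fin n)) :
    X n x i (σ * Equiv.swap ⟨k, hkj.trans_lt hj⟩ ⟨j, hj⟩) = X n x i σ := by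
  have hin : i < n := by omega
  rw [X, X, dif_pos hin, dif_pos hin, Equiv.Perm.mul_apply,
    Equiv.swap_apply_of_ne_of_ne (by simp [Fin.ext_iff]; omega) (by simp [Fin.ext_iff]; omega)]

theorem X_mul_swap_self {k j : ℕ} (hkj : k ≤ j) (hj : j < n) (σ : Equiv.Perm (Fin n)) :
    X n x k (σ * Equiv.swap ⟨k, hkj.trans_lt hj⟩ ⟨j, hj⟩) = X n x j σ := by
  simp [X, hj, hkj.trans_lt hj]

theorem Measurable.apply_mul_swap_of_F {k j : ℕ} {g : Equiv.Perm (Fin n) → ℝ}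
    (hg : Measurable[F n x k] g) (hkj : k ≤ j) (hj : j < n) (σ : Equiv.Perm (Fin n)) :
    g (σ * Equiv.swap ⟨k, hkj.trans_lt hj⟩ ⟨j, hj⟩) = g σ :=
  Measurable.eq_of_comap_eq hg (funext fun i => X_mul_swap_of_lt i.2 hkj hj σ)

theorem sum_mul_X_eq_of_le {k j : ℕ} {g : Equiv.Perm (Fin n) → ℝ}
    (hg : Measurable[F n x k] g) (hkj : k ≤ j) (hj : j < n) :
    ∑ σ, g σ * X n x k σ = ∑ σ, g σ * X n x j σ := by
  rw [← Equiv.sum_comp (Equiv.mulRight (Equiv.swap ⟨k, hkj.trans_lt hj⟩ ⟨j, hj⟩))]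
  simp only [Equiv.coe_mulRight, hg.apply_mul_swap_of_F hkj hj, X_mul_swap_self hkj hj]

theorem sum_mul_X_add_S_eq_zero (hx : ∑ i, x i = 0) {k : ℕ} (hk : k < n)
    {g : Equiv.Perm (Fin n) → ℝ} (hg : Measurable[F n x k] g) :
    ∑ σ, g σ * (((n : ℝ) - k) * X n x k σ + S n x k σ) = 0 := by
  have hrest : ∀ σ, ∑ j ∈ Ico k n, X n x j σ = -S n x k σ := fun σ => by
    rw [eq_neg_iff_add_eq_zero, add_comm, S, sum_range_add_sum_Ico _ hk.le]
    exact S_self_eq_zero hx σ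
  calc ∑ σ, g σ * (((n : ℝ) - k) * X n x k σ + S n x k σ)
      = ∑ j ∈ Ico k n, ∑ σ, g σ * X n x j σ + ∑ σ, g σ * S n x k σ := by
        rw [sum_congr rfl fun j hj => (sum_mul_X_eq_of_le hg (mem_Ico.mp hj).1
          (mem_Ico.mp hj).2).symm, sum_const, Nat.card_Ico, nsmul_eq_mul,
          Nat.cast_sub hk.le, mul_sum, ← sum_add_distrib]
        exact sum_congr rfl fun σ _ => by ring
    _ = ∑ σ, g σ * (∑ j ∈ Ico k n, X n x j σ + S n x k σ) := by
        rw [sum_comm, ← sum_add_distrib]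
        simp only [mul_sum, mul_add]
    _ = 0 := by simp [hrest]

end SamplingWithoutReplacement

theorem statement4 (n : ℕ) (x : Fin n → ℝ) (hx : ∑ i, x i = 0)
    (a : ℕ → Equiv.Perm (Fin n) → ℝ)
    (ha : ∀ i, i < n → Measurable[F n x i] (a i))
    (Mart : ℕ → Equiv.Perm (Fin n) → ℝ)
    (hMart : ∀ k σ, Mart k σ =
      (∑ i ∈ Finset.range k, a i σ * X n x i σ)
        + ((∑ i ∈ Finset.range k, a i σ) / ((n : ℝ) - k)) * S n x k σ) :
    (∀ k, 1 ≤ k → k ≤ n - 1 → StronglyMeasurable[F n x k] (Mart k)) ∧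
    (∀ k, 1 ≤ k → k + 1 ≤ n - 1 →
      (permMeasure n)[Mart (k + 1)|F n x k] =ᵐ[permMeasure n] Mart k) := by
  have ha' : ∀ {i k}, i ≤ k → k < n → Measurable[F n x k] (a i) := fun hik hk =>
    (ha _ (hik.trans_lt hk)).mono (F_mono hik) le_rfl
  have hA : ∀ {j k}, j ≤ k + 1 → k < n →
      Measurable[F n x k] fun σ => ∑ i ∈ range j, a i σ := fun hjk hk =>
    Finset.measurable_sum _ fun i hi => ha' (by grind) hk
  have hMeas : ∀ k, k < n → Measurable[F n x k] (Mart k) := fun k hk => by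
    rw [funext (hMart k)]
    exact (Finset.measurable_sum _ fun i hi => (ha' (mem_range.mp hi).le hk).mul
      (measurable_X_F (mem_range.mp hi))).add
      (((hA k.le_succ hk).div_const _).mul measurable_S_F)
  refine ⟨fun k _ hk => (hMeas k (by omega)).stronglyMeasurable, fun k _ hk => ?_⟩
  have hkn : (k : ℝ) + 1 < n := by exact_mod_cast (by omega : k + 1 < n)
  set c := fun σ => (a k σ + (∑ i ∈ range (k + 1), a i σ) / ((n : ℝ) - (k + 1)))
    / ((n : ℝ) - k)
  have hc : Measurable[F n x k] c :=
    ((ha' le_rfl (by omega)).add ((hA le_rfl (by omega)).div_const _)).div_const _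
  have hincrement : ∀ σ, Mart (k + 1) σ - Mart k σ =
      c σ * (((n : ℝ) - k) * X n x k σ + S n x k σ) := fun σ => by
    simp only [hMart, c, S, sum_range_succ, Nat.cast_add, Nat.cast_one]
    field_simp [(by linarith : (n : ℝ) - k ≠ 0), (by linarith : (n : ℝ) - (k + 1) ≠ 0)]
    ring
  refine condExp_ae_eq_of_forall_integral_mul_sub le_top (hMeas k (by omega)).stronglyMeasurable
    fun φ hφ => ?_
  simp_rw [integral_permMeasure, hincrement, ← mul_assoc]
  rw [sum_mul_X_add_S_eq_zero (g := fun σ => φ σ * c σ) hx (by omega) (hφ.mul hc), zero_div]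
end
end

section
/- If X_1,X_2,X_3 are the first three samples drawn without replacement from reals x_1,...,x_n (n >= 3) summing to 0, then E[X_1^2 X_2 X_3] = (2Q - B^2)/(n(n-1)(n-2)), where B = sum x_i^2 and Q = sum x_i^4. -/
open MeasureTheory Finset

noncomputable section

/-!
A permutation of `Fin (m + 1)` is its value at `0` together with a permutation of the remaining
`m` positions (`Equiv.Perm.decomposeFin`), so sums over orderings of products of the first few
draws can be peeled one draw at a time, each step contributing a factor and a power sum over the
values not yet drawn. For `∑ xᵢ = 0` the values other than `xₚ` sum to `-xₚ`, and the sum of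
`xᵢ² xⱼ xₖ` over distinct `i, j, k` collapses to `2Q - B²`; each such triple is hit by `(n - 3)!`
orderings.
-/

open Equiv Nat

section PermSums

variable {R : Type*} [CommRing R] {m : ℕ}

lemma sum_comp_swap_zero_succ {M : Type*} [AddCommGroup M] (g : Fin (m + 1) → M)
    (p : Fin (m + 1)) : ∑ i : Fin m, g (swap 0 p i.succ) = ∑ j, g j - g p := by
  rw [← Equiv.sum_comp (swap 0 p) g, Fin.sum_univ_succ, swap_apply_left, add_sub_cancel_left]

lemma sum_perm_apply_zero (z : Fin (m + 1) → R) :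
    ∑ σ : Perm (Fin (m + 1)), z (σ 0) = m ! * ∑ j, z j := by
  rw [← Equiv.sum_comp Perm.decomposeFin.symm, Fintype.sum_prod_type, Finset.mul_sum]
  simp [Fintype.card_perm]

lemma sum_perm_mul_apply_zero_one (z : Fin (m + 2) → R) :
    ∑ σ : Perm (Fin (m + 2)), z (σ 0) * z (σ 1) = m ! * ((∑ j, z j) ^ 2 - ∑ j, z j ^ 2) := by
  have inner : ∀ p, ∑ e : Perm (Fin (m + 1)), z (swap 0 p (e 0).succ) = m ! * (∑ j, z j - z p) :=
    fun p => by rw [sum_perm_apply_zero fun j => z (swap 0 p j.succ), sum_comp_swap_zero_succ]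
  rw [← Equiv.sum_comp Perm.decomposeFin.symm, Fintype.sum_prod_type]
  simp only [Perm.decomposeFin_symm_apply_zero, Perm.decomposeFin_symm_apply_one,
    ← Finset.mul_sum, inner, mul_left_comm (z _), mul_sub, Finset.sum_sub_distrib,
    ← Finset.sum_mul, sq]

lemma sum_perm_sq_mul_mul_apply_of_sum_eq_zero (w : Fin (m + 3) → R) (hw : ∑ j, w j = 0) :
    ∑ σ : Perm (Fin (m + 3)), w (σ 0) ^ 2 * w (σ 1) * w (σ 2)
      = m ! * (2 * ∑ j, w j ^ 4 - (∑ j, w j ^ 2) ^ 2) := by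
  have apply_two : ∀ (p : Fin (m + 3)) (e : Perm (Fin (m + 2))),
      Perm.decomposeFin.symm (p, e) 2 = swap 0 p (e 1).succ := fun p e => by
    rw [← Fin.succ_one_eq_two, Perm.decomposeFin_symm_apply_succ]
  have inner : ∀ p, ∑ e : Perm (Fin (m + 2)), w (swap 0 p (e 0).succ) * w (swap 0 p (e 1).succ)
      = m ! * (2 * w p ^ 2 - ∑ j, w j ^ 2) := fun p => by
    rw [sum_perm_mul_apply_zero_one fun j => w (swap 0 p j.succ), sum_comp_swap_zero_succ,
      sum_comp_swap_zero_succ fun j => w j ^ 2, hw]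
    ring
  rw [← Equiv.sum_comp Perm.decomposeFin.symm, Fintype.sum_prod_type]
  simp only [Perm.decomposeFin_symm_apply_zero, Perm.decomposeFin_symm_apply_one, apply_two,
    mul_assoc, ← Finset.mul_sum, inner]
  simp only [mul_left_comm (w _ ^ 2), ← Finset.mul_sum, mul_sub, Finset.sum_sub_distrib,
    ← Finset.sum_mul]
  simp only [← pow_add, sq (∑ j, w j ^ 2)]

end PermSums

lemma integral_permMeasure_s9 (n : ℕ) (f : Perm (Fin n) → ℝ) :
    ∫ σ, f σ ∂permMeasure n = (n ! : ℝ)⁻¹ * ∑ σ, f σ := by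
  simp [permMeasure, PMF.integral_eq_sum, Fintype.card_perm, Finset.mul_sum]

theorem statement9 (n : ℕ) (hn : 3 ≤ n) (x : Fin n → ℝ) (B Q : ℝ)
    (hx : ∑ i, x i = 0) (hB : ∑ i, (x i) ^ 2 = B) (hQ : ∑ i, (x i) ^ 4 = Q) :
    ∫ σ, (X n x 0 σ) ^ 2 * X n x 1 σ * X n x 2 σ ∂(permMeasure n)
      = (2 * Q - B ^ 2) / ((n : ℝ) * ((n : ℝ) - 1) * ((n : ℝ) - 2)) := by
  obtain ⟨m, rfl⟩ : ∃ m, n = m + 3 := ⟨n - 3, by omega⟩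
  have first_three : ∀ σ : Perm (Fin (m + 3)),
      X (m + 3) x 0 σ ^ 2 * X (m + 3) x 1 σ * X (m + 3) x 2 σ = x (σ 0) ^ 2 * x (σ 1) * x (σ 2) :=
    fun σ => rfl
  rw [integral_permMeasure_s9, Finset.sum_congr rfl fun σ _ => first_three σ,
    sum_perm_sq_mul_mul_apply_of_sum_eq_zero x hx, hB, hQ, Nat.factorial_succ, Nat.factorial_succ,
    Nat.factorial_succ]
  push_cast
  rw [show (m : ℝ) + 3 - 1 = m + 1 + 1 by ring, show (m : ℝ) + 3 - 2 = m + 1 by ring]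
  field_simp
  ring

end
end

section
/- For real numbers x_1,...,x_n with x_1+...+x_n = 0, the average over all permutations sigma of max_{1<=k<=n} | sum_{i=1}^k x_{sigma(i)} |^2 is at most (41/5) sum_{i=1}^n x_i^2. -/
/-!
Write `S_k` for the sum of the first `k` values in the order given by `σ`. Drawing without
replacement, the next value has conditional mean `-S_k / (n - k)`, so `S_k / (n - k)` is a
martingale and `|S_k| / (n - k)` a submartingale. Doob's `L²` inequality (in a pathwise form)
and `E S_N² = N (n - N) / (n (n - 1)) ∑ xᵢ²` give
`E max_{k ≤ N} S_k² ≤ 4 (n - 1) N / (n (n - N)) ∑ xᵢ²`. Reversing `σ` turns `S_k` into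
`-S_{n-k}`, so the maximum over all `k` is covered by the first `⌈n/2⌉` partial sums of `σ` and of
its reversal; the two bounds add up to at most `41/5 ∑ xᵢ²`.
-/

open MeasureTheory Finset

noncomputable section

open Equiv

section Doob

variable {R : Type*} [CommRing R] [LinearOrder R] [IsStrictOrderedRing R]

theorem partialSups_sq_sub_le (y : ℕ → R) (N : ℕ) :
    partialSups y N ^ 2 - 2 * partialSups y N * y N ≤
      -2 * ∑ k ∈ range N, partialSups y k * (y (k + 1) - y k) := by
  induction N with
  | zero => simp only [partialSups_zero, range_zero, sum_empty]; nlinarith [sq_nonneg (y 0)]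
  | succ N ih =>
    rw [sum_range_succ, ← Order.succ_eq_add_one, partialSups_succ, Order.succ_eq_add_one]
    rcases le_total (y (N + 1)) (partialSups y N) with h | h
    · rw [sup_eq_left.mpr h]; linarith
    · rw [sup_eq_right.mpr h]; nlinarith [sq_nonneg (y (N + 1) - partialSups y N)]

-- A pathwise Doob `L²` inequality: when `y` is a submartingale, the sum has nonnegative mean.
theorem partialSups_sq_le (y : ℕ → R) (N : ℕ) :
    partialSups y N ^ 2 ≤ 4 * y N ^ 2 - 4 * ∑ k ∈ range N, partialSups y k * (y (k + 1) - y k) := by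
  nlinarith [partialSups_sq_sub_le y N, sq_nonneg (partialSups y N - 2 * y N)]

end Doob

section Perm

variable {α R : Type*} [DecidableEq α] [Fintype α] [CommSemiring R]

theorem sum_perm_mul_apply_eq_of_mul_swap (G : Perm α → R) (g : α → R) {a b : α}
    (hG : ∀ σ, G (σ * swap a b) = G σ) :
    ∑ σ : Perm α, G σ * g (σ a) = ∑ σ : Perm α, G σ * g (σ b) := by
  rw [← Equiv.sum_comp (Equiv.mulRight (swap a b))]
  simp [hG]

theorem card_mul_sum_perm_apply (g : α → R) (a : α) :
    Fintype.card α * ∑ σ : Perm α, g (σ a) = (Fintype.card α).factorial * ∑ i, g i := by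
  have hconst (b : α) : ∑ σ : Perm α, g (σ b) = ∑ σ : Perm α, g (σ a) := by
    simpa using sum_perm_mul_apply_eq_of_mul_swap (fun _ => (1 : R)) g (a := b) (b := a)
      (fun _ => rfl)
  calc (Fintype.card α : R) * ∑ σ : Perm α, g (σ a)
      = ∑ b, ∑ σ : Perm α, g (σ b) := by simp [hconst]
    _ = ∑ σ : Perm α, ∑ i, g i := by rw [sum_comm]; simp only [Equiv.sum_comp]
    _ = _ := by simp [Fintype.card_perm]

end Perm

section PartialSums

variable {n : ℕ} {x : Fin n → ℝ}

theorem S_succ (σ : Perm (Fin n)) (k : ℕ) : S n x (k + 1) σ = S n x k σ + X n x k σ :=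
  sum_range_succ _ _

theorem X_val (σ : Perm (Fin n)) (i : Fin n) : X n x i σ = x (σ i) := by
  simp [X]

theorem sum_filter_val_lt_eq_S (σ : Perm (Fin n)) {k : ℕ} (hk : k ≤ n) :
    ∑ i ∈ univ.filter (fun i : Fin n => (i : ℕ) < k), x (σ i) = S n x k σ := by
  calc ∑ i ∈ univ.filter (fun i : Fin n => (i : ℕ) < k), x (σ i)
      = ∑ i : Fin n, if (i : ℕ) < k then X n x i σ else 0 := by simp only [sum_filter, X_val]
    _ = ∑ i ∈ range n, if i < k then X n x i σ else 0 :=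
        Fin.sum_univ_eq_sum_range (fun i => if i < k then X n x i σ else 0) n
    _ = S n x k σ := by
        rw [← sum_filter, S]
        congr 1
        ext i
        simp only [mem_filter, mem_range]
        omega

theorem S_eq_zero_of_le (hx : ∑ i, x i = 0) (σ : Perm (Fin n)) {k : ℕ} (hk : n ≤ k) :
    S n x k σ = 0 := by
  have hS : S n x k σ = S n x n σ := by
    refine (sum_subset (range_subset_range.mpr hk) fun i _ hi => ?_).symm
    simp only [mem_range, not_lt] at hi
    simp [X, hi]
  rw [hS, ← sum_filter_val_lt_eq_S σ le_rfl]
  simpa [Equiv.sum_comp σ x] using hx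

theorem sum_filter_le_val_eq_neg_S (hx : ∑ i, x i = 0) (σ : Perm (Fin n)) {k : ℕ}
    (hk : k ≤ n) :
    ∑ i ∈ univ.filter (fun i : Fin n => k ≤ (i : ℕ)), x (σ i) = - S n x k σ := by
  have hsplit := sum_filter_add_sum_filter_not univ (fun i : Fin n => (i : ℕ) < k) (fun i => x (σ i))
  simp only [not_lt, sum_filter_val_lt_eq_S σ hk, Equiv.sum_comp σ x, hx] at hsplit
  linarith

theorem S_mul_revPerm (hx : ∑ i, x i = 0) (σ : Perm (Fin n)) {j : ℕ} (hj : j ≤ n) :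
    S n x j (σ * Fin.revPerm) = - S n x (n - j) σ := by
  rw [← sum_filter_le_val_eq_neg_S hx σ (Nat.sub_le n j), ← sum_filter_val_lt_eq_S _ hj]
  refine sum_nbij' Fin.rev Fin.rev ?_ ?_ (fun i _ => Fin.rev_rev i) (fun i _ => Fin.rev_rev i)
    (fun i _ => rfl)
  all_goals intro i hi; simp only [mem_filter, mem_univ, true_and, Fin.val_rev] at hi ⊢; omega

def DependsOnFirstDraws {β : Type*} (k : ℕ) (G : Perm (Fin n) → β) : Prop :=
  ∀ σ τ : Perm (Fin n), (∀ i : Fin n, (i : ℕ) < k → σ i = τ i) → G σ = G τ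

theorem dependsOnFirstDraws_S {j k : ℕ} (hjk : j ≤ k) : DependsOnFirstDraws k (S n x j) := by
  intro σ τ h
  refine sum_congr rfl fun i hi => ?_
  simp only [mem_range] at hi
  unfold X
  split_ifs with hin
  · rw [h ⟨i, hin⟩ (by simp; omega)]
  · rfl

theorem card_filter_le_val {k : ℕ} (hk : k ≤ n) :
    #(univ.filter fun i : Fin n => k ≤ (i : ℕ)) = n - k := by
  have h := card_filter_add_card_filter_not (s := univ) (fun i : Fin n => (i : ℕ) < k)
  simp only [not_lt, Fin.card_filter_val_lt, card_univ, Fintype.card_fin] at h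
  omega

theorem sub_mul_sum_mul_X (hx : ∑ i, x i = 0) {k : ℕ} (hk : k < n) {G : Perm (Fin n) → ℝ}
    (hG : DependsOnFirstDraws k G) :
    ((n : ℝ) - k) * ∑ σ, G σ * X n x k σ = - ∑ σ, G σ * S n x k σ := by
  set a₀ : Fin n := ⟨k, hk⟩
  have hsame (a : Fin n) (ha : k ≤ (a : ℕ)) :
      ∑ σ, G σ * x (σ a) = ∑ σ, G σ * X n x k σ := by
    rw [show k = (a₀ : ℕ) from rfl]
    simp only [X_val]
    refine sum_perm_mul_apply_eq_of_mul_swap G x fun σ => hG _ _ fun i hi => ?_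
    rw [Perm.mul_apply, swap_apply_of_ne_of_ne]
    · rintro rfl; omega
    · rintro rfl; exact lt_irrefl k hi
  calc ((n : ℝ) - k) * ∑ σ, G σ * X n x k σ
      = ∑ a ∈ univ.filter (fun i : Fin n => k ≤ (i : ℕ)), ∑ σ, G σ * x (σ a) := by
        rw [sum_congr rfl fun a ha => hsame a (mem_filter.mp ha).2, sum_const,
          card_filter_le_val hk.le, nsmul_eq_mul, Nat.cast_sub hk.le]
    _ = ∑ σ, G σ * - S n x k σ := by
        rw [sum_comm]
        simp only [← mul_sum, sum_filter_le_val_eq_neg_S hx _ hk.le]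
    _ = - ∑ σ, G σ * S n x k σ := by simp

theorem card_mul_sum_X_sq {k : ℕ} (hk : k < n) :
    n * ∑ σ : Perm (Fin n), X n x k σ ^ 2 = n.factorial * ∑ i, x i ^ 2 := by
  simpa [X, hk] using card_mul_sum_perm_apply (fun i => x i ^ 2) (⟨k, hk⟩ : Fin n)

theorem mul_sum_S_sq (hx : ∑ i, x i = 0) {k : ℕ} (hk : k ≤ n) :
    (n : ℝ) * (n - 1) * ∑ σ, S n x k σ ^ 2 = k * (n - k) * n.factorial * ∑ i, x i ^ 2 := by
  induction k with
  | zero => simp [S]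
  | succ k ih =>
    have hkn : k < n := by omega
    have hcross := sub_mul_sum_mul_X hx hkn (dependsOnFirstDraws_S (x := x) le_rfl)
    have hsq := card_mul_sum_X_sq (x := x) hkn
    have hexpand : ∑ σ, S n x (k + 1) σ ^ 2 =
        ∑ σ, S n x k σ ^ 2 + 2 * ∑ σ, S n x k σ * X n x k σ + ∑ σ, X n x k σ ^ 2 := by
      simp only [S_succ, mul_sum, ← sum_add_distrib]
      exact sum_congr rfl fun σ _ => by ring
    have hnk : (n : ℝ) - k ≠ 0 := sub_ne_zero.mpr (by exact_mod_cast hkn.ne')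
    refine mul_left_cancel₀ hnk ?_
    rw [hexpand]
    simp only [← sq] at hcross
    push_cast
    linear_combination ((n : ℝ) - k - 2) * ih (by omega) + 2 * (n : ℝ) * (n - 1) * hcross
      + ((n : ℝ) - 1) * (n - k) * hsq

theorem sign_mul_le_abs (a b : ℝ) : (SignType.sign a : ℝ) * b ≤ |b| := by
  rcases lt_trichotomy a 0 with h | h | h <;> simp [h, neg_le_abs, le_abs_self]

def scaledAbsS (n : ℕ) (x : Fin n → ℝ) (σ : Perm (Fin n)) (k : ℕ) : ℝ :=
  |S n x k σ| / ((n : ℝ) - k)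

theorem dependsOnFirstDraws_partialSups_scaledAbsS (k : ℕ) :
    DependsOnFirstDraws k fun σ => partialSups (scaledAbsS n x σ) k := by
  intro σ τ h
  simp only [partialSups_apply]
  exact sup'_congr _ rfl fun j hj => by
    rw [scaledAbsS, scaledAbsS, dependsOnFirstDraws_S (mem_Iic.mp hj) σ τ h]

theorem partialSups_scaledAbsS_nonneg (σ : Perm (Fin n)) (k : ℕ) :
    0 ≤ partialSups (scaledAbsS n x σ) k :=
  le_trans (by simp [scaledAbsS, S]) (le_partialSups_of_le _ (Nat.zero_le k))

theorem sum_mul_scaledAbsS_le_succ (hx : ∑ i, x i = 0) {k : ℕ} (hk : k + 2 ≤ n)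
    {G : Perm (Fin n) → ℝ} (hG : DependsOnFirstDraws k G) (hG₀ : ∀ σ, 0 ≤ G σ) :
    ∑ σ, G σ * scaledAbsS n x σ k ≤ ∑ σ, G σ * scaledAbsS n x σ (k + 1) := by
  set d : ℝ := n - k with hd
  have hd₂ : 2 ≤ d := by rw [hd, le_sub_iff_add_le']; exact_mod_cast hk
  -- `G · sign S_k` is still a function of the first `k` draws and turns `S_k` into `|S_k|`.
  set H : Perm (Fin n) → ℝ := fun σ => G σ * SignType.sign (S n x k σ)
  have hH : DependsOnFirstDraws k H := fun σ τ h => by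
    simp only [H, hG σ τ h, dependsOnFirstDraws_S le_rfl σ τ h]
  have hHS : ∑ σ, H σ * S n x k σ = ∑ σ, G σ * |S n x k σ| :=
    sum_congr rfl fun σ _ => by rw [mul_assoc, sign_mul_self]
  have hHX := sub_mul_sum_mul_X hx (by omega) hH
  have hHS_succ : ∑ σ, H σ * S n x (k + 1) σ ≤ ∑ σ, G σ * |S n x (k + 1) σ| :=
    sum_le_sum fun σ _ => by
      rw [mul_assoc]; exact mul_le_mul_of_nonneg_left (sign_mul_le_abs _ _) (hG₀ σ)
  have key : (d - 1) * ∑ σ, G σ * |S n x k σ| ≤ d * ∑ σ, G σ * |S n x (k + 1) σ| := by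
    have hsplit : ∑ σ, H σ * S n x (k + 1) σ = ∑ σ, H σ * S n x k σ + ∑ σ, H σ * X n x k σ := by
      simp only [S_succ, mul_add, sum_add_distrib]
    nlinarith
  have hcast : (n : ℝ) - ↑(k + 1) = d - 1 := by push_cast; ring
  simp only [scaledAbsS, hcast, ← hd, mul_div_assoc', ← sum_div]
  rw [div_le_div_iff₀ (by linarith) (by linarith)]
  linarith

theorem sum_partialSups_scaledAbsS_sq_le (hx : ∑ i, x i = 0) {N : ℕ} (hN : N < n) :
    ∑ σ, partialSups (scaledAbsS n x σ) N ^ 2 ≤ 4 * ∑ σ, scaledAbsS n x σ N ^ 2 := by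
  have hdrift : 0 ≤ ∑ σ, ∑ k ∈ range N, partialSups (scaledAbsS n x σ) k *
      (scaledAbsS n x σ (k + 1) - scaledAbsS n x σ k) := by
    rw [sum_comm]
    refine sum_nonneg fun k hk => ?_
    simp only [mul_sub, sum_sub_distrib, sub_nonneg]
    exact sum_mul_scaledAbsS_le_succ hx (by simp at hk; omega)
      (dependsOnFirstDraws_partialSups_scaledAbsS k) (partialSups_scaledAbsS_nonneg · k)
  calc ∑ σ, partialSups (scaledAbsS n x σ) N ^ 2
      ≤ ∑ σ, (4 * scaledAbsS n x σ N ^ 2 - 4 * ∑ k ∈ range N, partialSups (scaledAbsS n x σ) k *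
          (scaledAbsS n x σ (k + 1) - scaledAbsS n x σ k)) :=
        sum_le_sum fun σ _ => partialSups_sq_le _ N
    _ ≤ 4 * ∑ σ, scaledAbsS n x σ N ^ 2 := by
        rw [sum_sub_distrib, ← mul_sum, ← mul_sum]
        linarith

theorem abs_S_le_mul_partialSups_scaledAbsS (σ : Perm (Fin n)) {j N : ℕ} (hj : j ≤ N)
    (hN : N < n) : |S n x j σ| ≤ ((n : ℝ) - 1) * partialSups (scaledAbsS n x σ) N := by
  have hM₀ := partialSups_scaledAbsS_nonneg (x := x) σ N
  rcases Nat.eq_zero_or_pos j with rfl | hj₁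
  · simp only [S, range_zero, sum_empty, abs_zero]
    exact mul_nonneg (sub_nonneg.mpr (by exact_mod_cast hN.pos)) hM₀
  have hjn : (j : ℝ) < n := by exact_mod_cast hj.trans_lt hN
  have hj₁' : (1 : ℝ) ≤ j := by exact_mod_cast hj₁
  calc |S n x j σ| = ((n : ℝ) - j) * scaledAbsS n x σ j := by
        rw [scaledAbsS, mul_div_cancel₀ _ (sub_ne_zero.mpr hjn.ne')]
    _ ≤ ((n : ℝ) - 1) * partialSups (scaledAbsS n x σ) N :=
        mul_le_mul (by linarith) (le_partialSups_of_le _ hj)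
          (div_nonneg (abs_nonneg _) (by linarith)) (by linarith)

theorem sub_mul_sum_partialSups_S_sq_le (hx : ∑ i, x i = 0) {N : ℕ} (hN : N < n) :
    ((n : ℝ) - N) * n * ∑ σ, partialSups (fun k => S n x k σ ^ 2) N ≤
      4 * (n - 1) * N * n.factorial * ∑ i, x i ^ 2 := by
  have hNn : (N : ℝ) < n := by exact_mod_cast hN
  have hd : (n : ℝ) - N ≠ 0 := sub_ne_zero.mpr hNn.ne'
  have hpt (σ : Perm (Fin n)) : partialSups (fun k => S n x k σ ^ 2) N ≤
      ((n : ℝ) - 1) ^ 2 * partialSups (scaledAbsS n x σ) N ^ 2 :=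
    partialSups_le _ _ _ fun j hj => by
      rw [← mul_pow, ← sq_abs]
      exact pow_le_pow_left₀ (abs_nonneg _) (abs_S_le_mul_partialSups_scaledAbsS σ hj hN) 2
  have hY : ∑ σ, scaledAbsS n x σ N ^ 2 = (∑ σ, S n x N σ ^ 2) / ((n : ℝ) - N) ^ 2 := by
    simp only [scaledAbsS, div_pow, sq_abs, sum_div]
  have hmax : ∑ σ, partialSups (fun k => S n x k σ ^ 2) N ≤
      4 * ((n : ℝ) - 1) ^ 2 * (∑ σ, S n x N σ ^ 2) / ((n : ℝ) - N) ^ 2 := by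
    calc ∑ σ, partialSups (fun k => S n x k σ ^ 2) N
        ≤ ((n : ℝ) - 1) ^ 2 * ∑ σ, partialSups (scaledAbsS n x σ) N ^ 2 := by
          rw [mul_sum]; exact sum_le_sum fun σ _ => hpt σ
      _ ≤ ((n : ℝ) - 1) ^ 2 * (4 * ∑ σ, scaledAbsS n x σ N ^ 2) :=
          mul_le_mul_of_nonneg_left (sum_partialSups_scaledAbsS_sq_le hx hN) (sq_nonneg _)
      _ = _ := by rw [hY]; ring
  have hvar := mul_sum_S_sq hx hN.le
  calc ((n : ℝ) - N) * n * ∑ σ, partialSups (fun k => S n x k σ ^ 2) N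
      ≤ ((n : ℝ) - N) * n * (4 * ((n : ℝ) - 1) ^ 2 * (∑ σ, S n x N σ ^ 2) / ((n : ℝ) - N) ^ 2) :=
        mul_le_mul_of_nonneg_left hmax (by positivity)
    _ = 4 * (n - 1) * (n * (n - 1) * ∑ σ, S n x N σ ^ 2) / ((n : ℝ) - N) := by
        field_simp
    _ = 4 * (n - 1) * N * n.factorial * ∑ i, x i ^ 2 := by
        rw [hvar]; field_simp

theorem sq_abs_S_le_partialSups_add (hx : ∑ i, x i = 0) (σ : Perm (Fin n)) {k N : ℕ}
    (hk : k ≤ n) :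
    |S n x k σ| ^ 2 ≤ partialSups (fun j => S n x j σ ^ 2) N +
      partialSups (fun j => S n x j (σ * Fin.revPerm) ^ 2) (n - N) := by
  have h₀ (τ : Perm (Fin n)) (M : ℕ) : 0 ≤ partialSups (fun j => S n x j τ ^ 2) M :=
    (sq_nonneg (S n x 0 τ)).trans (le_partialSups_of_le (fun j => S n x j τ ^ 2) (Nat.zero_le M))
  rw [sq_abs]
  rcases le_total k N with hkN | hNk
  · linarith [le_partialSups_of_le (fun j => S n x j σ ^ 2) hkN, h₀ (σ * Fin.revPerm) (n - N)]
  · have hrev : S n x k σ ^ 2 = S n x (n - k) (σ * Fin.revPerm) ^ 2 := by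
      rw [S_mul_revPerm hx σ (Nat.sub_le n k), Nat.sub_sub_self hk, neg_sq]
    have := le_partialSups_of_le (fun j => S n x j (σ * Fin.revPerm) ^ 2)
      (show n - k ≤ n - N by omega)
    linarith [h₀ σ N]

end PartialSums

theorem twenty_mul_sq_add_sq_le (n : ℕ) :
    20 * ((n : ℝ) - 1) * (((n + 1) / 2 : ℕ) ^ 2 + ((n : ℝ) - ((n + 1) / 2 : ℕ)) ^ 2) ≤
      41 * n * ((n + 1) / 2 : ℕ) * ((n : ℝ) - ((n + 1) / 2 : ℕ)) := by
  obtain ⟨m, rfl | rfl⟩ := Nat.even_or_odd' n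
  · rw [show (2 * m + 1) / 2 = m by omega]
    push_cast
    nlinarith
  · rw [show (2 * m + 1 + 1) / 2 = m + 1 by omega]
    push_cast
    nlinarith

theorem sum_partialSups_S_sq_add_le {n : ℕ} {x : Fin n → ℝ} (hx : ∑ i, x i = 0) (hn : 2 ≤ n) :
    ∑ σ, partialSups (fun k => S n x k σ ^ 2) ((n + 1) / 2) +
      ∑ σ, partialSups (fun k => S n x k σ ^ 2) (n - (n + 1) / 2) ≤
        41 / 5 * n.factorial * ∑ i, x i ^ 2 := by
  set N := (n + 1) / 2
  have hN : (1 : ℝ) ≤ N := by exact_mod_cast (show 1 ≤ N by omega)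
  have hNn : (N : ℝ) + 1 ≤ n := by exact_mod_cast (show N + 1 ≤ n by omega)
  have h₁ := sub_mul_sum_partialSups_S_sq_le hx (N := N) (by omega)
  have h₂ := sub_mul_sum_partialSups_S_sq_le hx (N := n - N) (by omega)
  rw [Nat.cast_sub (by omega), sub_sub_cancel] at h₂
  have hQ : 0 ≤ (n.factorial : ℝ) * ∑ i, x i ^ 2 := by positivity
  have hab : 0 < (N : ℝ) * (n - N) * n := by
    apply mul_pos (mul_pos _ _) _ <;> linarith
  refine le_of_mul_le_mul_left ?_ hab
  nlinarith [mul_le_mul_of_nonneg_left h₁ (show (0 : ℝ) ≤ N by linarith),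
    mul_le_mul_of_nonneg_left h₂ (show (0 : ℝ) ≤ n - N by linarith),
    mul_le_mul_of_nonneg_left (twenty_mul_sq_add_sq_le n) hQ]

theorem statement12 (n : ℕ) (hn : 1 ≤ n) (x : Fin n → ℝ) (hx : ∑ i, x i = 0) :
    (1 / (Nat.factorial n : ℝ)) * ∑ σ : Equiv.Perm (Fin n),
        (Finset.Icc 1 n).sup' (Finset.nonempty_Icc.mpr hn)
          (fun k => |∑ i ∈ Finset.univ.filter fun i : Fin n => (i : ℕ) < k, x (σ i)| ^ 2)
      ≤ (41 / 5) * ∑ i, (x i) ^ 2 := by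
  rw [one_div, inv_mul_le_iff₀ (by positivity), ← mul_assoc, mul_comm _ (41 / 5 : ℝ)]
  obtain rfl | hn₂ : n = 1 ∨ 2 ≤ n := by omega
  · refine (sum_nonpos fun σ _ => sup'_le _ _ fun k hk => ?_).trans (by positivity)
    rw [sum_filter_val_lt_eq_S σ (mem_Icc.mp hk).2, S_eq_zero_of_le hx σ (mem_Icc.mp hk).1]
    simp
  set P : Perm (Fin n) → ℕ → ℝ := fun σ => partialSups (fun k => S n x k σ ^ 2)
  calc _ ≤ ∑ σ, (P σ ((n + 1) / 2) + P (σ * Fin.revPerm) (n - (n + 1) / 2)) :=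
        sum_le_sum fun σ _ => sup'_le _ _ fun k hk => by
          rw [sum_filter_val_lt_eq_S σ (mem_Icc.mp hk).2]
          exact sq_abs_S_le_partialSups_add hx σ (mem_Icc.mp hk).2
    _ = ∑ σ, P σ ((n + 1) / 2) + ∑ σ, P σ (n - (n + 1) / 2) := by
        rw [sum_add_distrib]
        congr 1
        exact Equiv.sum_comp (Equiv.mulRight Fin.revPerm) (P · _)
    _ ≤ _ := sum_partialSups_S_sq_add_le hx hn₂

end
end

section
/- For real numbers x_1,...,x_n (n >= 2) with x_1+...+x_n = 0, the average over all permutations sigma of max_{2<=k<=n} | ( (sum_{i=1}^k x_{sigma(i)})^2 - ((n-k)/(n-1)) sum_{i=1}^k x_{sigma(i)}^2 ) / (k(k-1)) |^2 is at most (4/(n-1)^2) [ (sum_{i=1}^n x_i^2)^2 - sum_{i=1}^n x_i^4 ]. -/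
/-!
Write `P k σ` for the `k`-th term inside the maximum. It is the U-statistic of the first `k`
draws for the kernel `h a b = a * b + (a ^ 2 + b ^ 2) / (2 * (n - 1))`, which has mean zero
because `∑ i, x i = 0`, and U-statistics of a sample drawn without replacement form a reverse
martingale: `P (k + 1)` is the average of the `k + 1` leave-one-out values of `P k`. Moreover
`P n = 0`. So `|P k|` is a reverse submartingale, and Doob's `L²` maximal inequality, proved
with Garsia's pathwise bound `M a ^ 2 ≤ 2 * ∑ k, |P k| * (M k - M (k + 1))` for the running
maximum `M`, bounds the average of `max_k P k ^ 2` by `4` times the average of `P 2 ^ 2`.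
Finally `P 2 σ = h (x (σ 0)) (x (σ 1))`, so the latter is the average of `h (x a) (x b) ^ 2`
over the ordered pairs `a ≠ b`, which is computed explicitly.
-/

open MeasureTheory Finset

noncomputable section

section ReverseDoob

variable {Ω : Type*}

/-- `max_{k ≤ j ≤ b} f j ω`, with junk value `0` when `b < k`. -/
def tailMax (f : ℕ → Ω → ℝ) (b k : ℕ) (ω : Ω) : ℝ :=
  if h : k ≤ b then (Icc k b).sup' (nonempty_Icc.mpr h) (f · ω) else 0

variable {f : ℕ → Ω → ℝ} {a b : ℕ}

lemma tailMax_self (ω : Ω) : tailMax f b b ω = f b ω := by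
  simp [tailMax]

lemma tailMax_eq_max {k : ℕ} (hk : k < b) (ω : Ω) :
    tailMax f b k ω = max (f k ω) (tailMax f b (k + 1) ω) := by
  rw [tailMax, tailMax, dif_pos hk.le, dif_pos (Nat.succ_le_of_lt hk)]
  simp only [← insert_Icc_add_one_left_eq_Icc hk.le]
  exact sup'_insert ..

lemma tailMax_nonneg (hf : ∀ k ω, 0 ≤ f k ω) (k : ℕ) (ω : Ω) : 0 ≤ tailMax f b k ω := by
  unfold tailMax
  split_ifs with h
  · exact (hf k ω).trans (le_sup' (f · ω) (left_mem_Icc.mpr h))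
  · exact le_rfl

lemma tailMax_succ_le (hf : ∀ k ω, 0 ≤ f k ω) (k : ℕ) (ω : Ω) :
    tailMax f b (k + 1) ω ≤ tailMax f b k ω := by
  rcases lt_or_ge k b with hk | hk
  · exact (tailMax_eq_max hk ω).symm ▸ le_max_right _ _
  · simpa [tailMax, show ¬k + 1 ≤ b by omega] using tailMax_nonneg hf k ω

lemma sup'_sq_eq_sq_tailMax (hf : ∀ k ω, 0 ≤ f k ω) (hab : a ≤ b) (ω : Ω) :
    (Icc a b).sup' (nonempty_Icc.mpr hab) (fun k => f k ω ^ 2) = tailMax f b a ω ^ 2 := by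
  have hM : tailMax f b a ω = (Icc a b).sup' (nonempty_Icc.mpr hab) (f · ω) := dif_pos hab
  apply le_antisymm
  · exact sup'_le _ _ fun k hk => pow_le_pow_left₀ (hf k ω) (hM ▸ le_sup' (f · ω) hk) 2
  · obtain ⟨k, hk, hMk⟩ := exists_mem_eq_sup' (nonempty_Icc.mpr hab) (f · ω)
    rw [hM, hMk]
    exact le_sup' (fun k => f k ω ^ 2) hk

lemma measurable_tailMax {G : ℕ → MeasurableSpace Ω} (hG : Antitone G)
    (hf : ∀ j, Measurable[G j] (f j)) (k : ℕ) : Measurable[G k] (tailMax f b k) := by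
  unfold tailMax
  split_ifs with h
  · simp_rw [← Finset.sup'_apply]
    exact @Finset.measurable_sup' _ _ _ (G k) _ _ _ _ (nonempty_Icc.mpr h) _
      fun j hj => (hf j).mono (hG (mem_Icc.mp hj).1) le_rfl
  · exact measurable_const

lemma sq_tailMax_le (hfb : f b = 0) (hab : a ≤ b) (ω : Ω) :
    tailMax f b a ω ^ 2
      ≤ 2 * ∑ k ∈ Ico a b, f k ω * (tailMax f b k ω - tailMax f b (k + 1) ω) := by
  induction hab using Nat.decreasingInduction with
  | self => simp [tailMax_self, hfb]
  | of_succ k hk ih =>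
    have hmax := tailMax_eq_max (f := f) hk ω
    have hstep : tailMax f b k ω ^ 2
        ≤ tailMax f b (k + 1) ω ^ 2 + 2 * f k ω * (tailMax f b k ω - tailMax f b (k + 1) ω) := by
      rcases le_total (f k ω) (tailMax f b (k + 1) ω) with h | h
      · rw [hmax, max_eq_right h, sub_self, mul_zero, add_zero]
      · rw [hmax, max_eq_left h]; nlinarith [sq_nonneg (f k ω - tailMax f b (k + 1) ω)]
    rw [sum_eq_sum_Ico_succ_bot hk]
    linarith

variable [Fintype Ω] {G : ℕ → MeasurableSpace Ω}

/-- For the uniform measure on `Ω`, this is `E[f k | G (k + 1)] ≥ f (k + 1)` for `a ≤ k < b`,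
tested against the nonnegative `G (k + 1)`-measurable functions. -/
def IsReverseSubmartingale (G : ℕ → MeasurableSpace Ω) (f : ℕ → Ω → ℝ) (a b : ℕ) : Prop :=
  ∀ k, a ≤ k → k < b → ∀ W : Ω → ℝ, Measurable[G (k + 1)] W → 0 ≤ W →
    ∑ ω, f (k + 1) ω * W ω ≤ ∑ ω, f k ω * W ω

lemma IsReverseSubmartingale.sum_mul_le (hsub : IsReverseSubmartingale G f a b)
    (hG : Antitone G) {k : ℕ} (hak : a ≤ k) (hkb : k ≤ b) {W : Ω → ℝ}
    (hW : Measurable[G k] W) (hW0 : 0 ≤ W) :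
    ∑ ω, f k ω * W ω ≤ ∑ ω, f a ω * W ω := by
  induction k, hak using Nat.le_induction with
  | base => exact le_rfl
  | succ k hak ih =>
    exact (hsub k hak hkb W hW hW0).trans (ih (by omega) (hW.mono (hG k.le_succ) le_rfl))

/-- Garsia's argument: the increments `M k - M (k + 1)` of the running maximum are nonnegative
and `G k`-measurable, so in the pathwise bound `sq_tailMax_le` each `f k` may be replaced by
`f a`, after which the increments telescope. -/
lemma IsReverseSubmartingale.sum_sq_tailMax_le (hsub : IsReverseSubmartingale G f a b)
    (hG : Antitone G) (hf_meas : ∀ k, Measurable[G k] (f k)) (hf : ∀ k ω, 0 ≤ f k ω)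
    (hfb : f b = 0) (hab : a ≤ b) :
    ∑ ω, tailMax f b a ω ^ 2 ≤ 2 * ∑ ω, f a ω * tailMax f b a ω := by
  set M := tailMax f b
  have hM_anti (k : ℕ) : 0 ≤ M k - M (k + 1) := fun ω =>
    sub_nonneg.mpr (tailMax_succ_le hf k ω)
  have hM_meas (k : ℕ) : Measurable[G k] (M k - M (k + 1)) :=
    (measurable_tailMax hG hf_meas k).sub
      ((measurable_tailMax hG hf_meas (k + 1)).mono (hG k.le_succ) le_rfl)
  calc ∑ ω, M a ω ^ 2 ≤ ∑ ω, 2 * ∑ k ∈ Ico a b, f k ω * (M k ω - M (k + 1) ω) :=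
        sum_le_sum fun ω _ => sq_tailMax_le hfb hab ω
    _ = 2 * ∑ k ∈ Ico a b, ∑ ω, f k ω * (M k - M (k + 1)) ω := by
        rw [← mul_sum, sum_comm]; rfl
    _ ≤ 2 * ∑ k ∈ Ico a b, ∑ ω, f a ω * (M k - M (k + 1)) ω := by
        gcongr 2 * ?_
        refine sum_le_sum fun k hk => ?_
        obtain ⟨hak, hkb⟩ := mem_Ico.mp hk
        exact hsub.sum_mul_le hG hak hkb.le (hM_meas k) (hM_anti k)
    _ = 2 * ∑ ω, f a ω * (M a ω - M b ω) := by
        rw [sum_comm]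
        refine congrArg (2 * ·) (sum_congr rfl fun ω _ => ?_)
        rw [← mul_sum, ← neg_sub, ← sum_Ico_sub (M · ω) hab, ← sum_neg_distrib]
        simp only [Pi.sub_apply, neg_sub]
    _ = 2 * ∑ ω, f a ω * M a ω := by
        simp [M, tailMax_self, hfb]

theorem IsReverseSubmartingale.sum_sup'_sq_le (hsub : IsReverseSubmartingale G f a b)
    (hG : Antitone G) (hf_meas : ∀ k, Measurable[G k] (f k)) (hf : ∀ k ω, 0 ≤ f k ω)
    (hfb : f b = 0) (hab : a ≤ b) :
    ∑ ω, (Icc a b).sup' (nonempty_Icc.mpr hab) (fun k => f k ω ^ 2) ≤ 4 * ∑ ω, f a ω ^ 2 := by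
  simp only [sup'_sq_eq_sq_tailMax hf hab]
  have hgarsia := hsub.sum_sq_tailMax_le hG hf_meas hf hfb hab
  have hcs := sum_mul_sq_le_sq_mul_sq univ (f a) (tailMax f b a)
  have hB : 0 ≤ ∑ ω, f a ω * tailMax f b a ω :=
    sum_nonneg fun ω _ => mul_nonneg (hf a ω) (tailMax_nonneg hf a ω)
  have hC : 0 ≤ ∑ ω, f a ω ^ 2 := sum_nonneg fun ω _ => sq_nonneg _
  nlinarith

end ReverseDoob

section Counting

open Equiv

variable {α β : Type*} [Fintype α] [AddCommMonoid β]

lemma sum_perm_apply_offDiag (G : α → α → β) (σ : Perm α) :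
    ∑ p ∈ univ.offDiag, G (σ p.1) (σ p.2) = ∑ p ∈ univ.offDiag, G p.1 p.2 :=
  sum_equiv (σ.prodCongr σ) (by simp [σ.injective.ne_iff]) fun _ _ => rfl

variable [DecidableEq α]

lemma sum_perm_apply_apply_eq {G : α → α → β} {i j i' j' : α} (hij : i ≠ j) (hij' : i' ≠ j') :
    ∑ σ : Perm α, G (σ i') (σ j') = ∑ σ : Perm α, G (σ i) (σ j) := by
  obtain ⟨ρ, hρi, hρj⟩ :=
    MulAction.is_two_pretransitive_iff.mp (Perm.isMultiplyPretransitive α 2) hij hij'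
  rw [← hρi, ← hρj]
  exact Equiv.sum_comp (Equiv.mulRight ρ) fun σ => G (σ i) (σ j)

theorem card_offDiag_smul_sum_perm_apply_apply (G : α → α → β) {i j : α} (hij : i ≠ j) :
    #(univ.offDiag : Finset (α × α)) • ∑ σ : Perm α, G (σ i) (σ j)
      = (Fintype.card α).factorial • ∑ p ∈ univ.offDiag, G p.1 p.2 := by
  calc #(univ.offDiag : Finset (α × α)) • ∑ σ : Perm α, G (σ i) (σ j)
      = ∑ p ∈ univ.offDiag, ∑ σ : Perm α, G (σ p.1) (σ p.2) := by
        rw [← sum_const]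
        exact sum_congr rfl fun p hp => (sum_perm_apply_apply_eq hij (mem_offDiag.mp hp).2.2).symm
    _ = (Fintype.card α).factorial • ∑ p ∈ univ.offDiag, G p.1 p.2 := by
        rw [sum_comm, ← Fintype.card_perm, ← card_univ, ← sum_const]
        exact sum_congr rfl fun σ _ => sum_perm_apply_offDiag G σ

end Counting

section Sampling

open Equiv

def initSeg (n k : ℕ) : Finset (Fin n) := univ.filter fun i => (i : ℕ) < k

def fixingTail (n k : ℕ) : Subgroup (Perm (Fin n)) :=
  fixingSubgroup (Perm (Fin n)) {i : Fin n | k ≤ (i : ℕ)}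

/-- The σ-algebra generated by the draws from position `k` on, which also determine the set of
the first `k` draws. -/
abbrev tailSigma (n k : ℕ) : MeasurableSpace (Perm (Fin n)) :=
  ⨅ π ∈ fixingTail n k, MeasurableSpace.invariants (· * π)

variable {n k : ℕ}

@[simp]
lemma mem_initSeg {i : Fin n} : i ∈ initSeg n k ↔ (i : ℕ) < k := by
  simp [initSeg]

lemma card_initSeg (hk : k ≤ n) : #(initSeg n k) = k := by
  rw [initSeg, Fin.card_filter_val_lt, min_eq_right hk]

lemma initSeg_self : initSeg n n = univ := by
  ext i; simp

lemma initSeg_succ (hk : k < n) : initSeg n (k + 1) = insert ⟨k, hk⟩ (initSeg n k) := by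
  ext i; simp [Fin.ext_iff]; omega

lemma initSeg_two (hn : 2 ≤ n) : initSeg n 2 = {⟨0, by omega⟩, ⟨1, by omega⟩} := by
  ext i; simp [Fin.ext_iff]; omega

lemma sum_initSeg_comp_swap {t : Fin n} (hk : k < n) (ht : t ∈ initSeg n (k + 1))
    (g : Fin n → ℝ) :
    ∑ i ∈ initSeg n k, g (swap t ⟨k, hk⟩ i) = ∑ i ∈ initSeg n (k + 1), g i - g t := by
  have hsupp : {i | swap t ⟨k, hk⟩ i ≠ i} ⊆ initSeg n (k + 1) := fun i hi => by
    rcases eq_or_ne i t with rfl | hit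
    · exact ht
    · have : i = ⟨k, hk⟩ := by
        by_contra hik; exact hi (swap_apply_of_ne_of_ne hit hik)
      simp [this]
  have := Perm.sum_comp (swap t ⟨k, hk⟩) _ g hsupp
  rw [initSeg_succ hk, sum_insert (by simp), swap_apply_right] at this
  rw [initSeg_succ hk]
  linarith

lemma mem_fixingTail {π : Perm (Fin n)} :
    π ∈ fixingTail n k ↔ ∀ i : Fin n, k ≤ (i : ℕ) → π i = i := by
  simp [fixingTail, mem_fixingSubgroup_iff, Perm.smul_def]

lemma swap_mem_fixingTail {t : Fin n} (hk : k < n) (ht : t ∈ initSeg n (k + 1)) :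
    swap t ⟨k, hk⟩ ∈ fixingTail n (k + 1) := by
  refine mem_fixingTail.mpr fun i hi => swap_apply_of_ne_of_ne ?_ ?_
  · rintro rfl; simp at ht; omega
  · rintro rfl; simp at hi

lemma sum_initSeg_comp_of_mem_fixingTail {m : ℕ} (hkm : k ≤ m) {π : Perm (Fin n)}
    (hπ : π ∈ fixingTail n k) (g : Fin n → ℝ) :
    ∑ i ∈ initSeg n m, g (π i) = ∑ i ∈ initSeg n m, g i := by
  refine Perm.sum_comp π _ g fun i hi => mem_initSeg.mpr ?_
  by_contra! hmi
  exact hi (mem_fixingTail.mp hπ i (hkm.trans hmi))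

lemma antitone_tailSigma : Antitone (tailSigma n) := fun _ _ hkk' =>
  iInf₂_mono' fun π hπ =>
    ⟨π, fixingSubgroup_antitone _ _ (fun _ hi => hkk'.trans hi) hπ, le_rfl⟩

lemma measurable_tailSigma_iff {W : Perm (Fin n) → ℝ} :
    Measurable[tailSigma n k] W ↔ ∀ π ∈ fixingTail n k, ∀ σ, W (σ * π) = W σ := by
  constructor
  · intro hW π hπ σ
    exact congrFun (MeasurableSpace.comp_eq_of_measurable_invariants
      (hW.mono (iInf₂_le π hπ) le_rfl)) σ
  · intro hW s _
    unfold tailSigma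
    simp only [MeasurableSpace.measurableSet_iInf, MeasurableSpace.measurableSet_invariants]
    exact fun π hπ => ⟨trivial, by ext σ; simp [hW π hπ]⟩

end Sampling

section UStatistic

open Equiv

def pairKernel (u a b : ℝ) : ℝ := a * b + (a ^ 2 + b ^ 2) * u

/-- The average of `pairKernel (2 * (n - 1))⁻¹ (x (σ i)) (x (σ j))` over the ordered pairs
`i ≠ j` of the first `k` positions (a U-statistic); when `∑ i, x i = 0` this kernel has mean
zero under sampling without replacement. -/
def uStat (n : ℕ) (x : Fin n → ℝ) (k : ℕ) (σ : Perm (Fin n)) : ℝ :=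
  ((∑ i ∈ initSeg n k, x (σ i)) ^ 2
      - (((n : ℝ) - k) / ((n : ℝ) - 1)) * ∑ i ∈ initSeg n k, x (σ i) ^ 2)
    / ((k : ℝ) * ((k : ℝ) - 1))

variable {n k : ℕ} {x : Fin n → ℝ}

lemma measurable_uStat (k : ℕ) : Measurable[tailSigma n k] (uStat n x k) := by
  refine measurable_tailSigma_iff.mpr fun π hπ σ => ?_
  simp only [uStat, Perm.mul_apply,
    sum_initSeg_comp_of_mem_fixingTail le_rfl hπ (fun i => x (σ i)),
    sum_initSeg_comp_of_mem_fixingTail le_rfl hπ (fun i => x (σ i) ^ 2)]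

lemma uStat_self (hx : ∑ i, x i = 0) (σ : Perm (Fin n)) : uStat n x n σ = 0 := by
  simp [uStat, initSeg_self, Equiv.sum_comp σ x, hx]

lemma uStat_two (hn : 2 ≤ n) (σ : Perm (Fin n)) :
    uStat n x 2 σ
      = pairKernel (2 * ((n : ℝ) - 1))⁻¹ (x (σ ⟨0, by omega⟩)) (x (σ ⟨1, by omega⟩)) := by
  have hn1 : (n : ℝ) - 1 ≠ 0 := by
    have : (2 : ℝ) ≤ n := by exact_mod_cast hn
    linarith
  rw [uStat, pairKernel, initSeg_two hn, sum_pair (by simp [Fin.ext_iff]),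
    sum_pair (by simp [Fin.ext_iff])]
  field_simp
  ring

/-- `σ * swap t k` puts the first `k + 1` draws other than draw `t` into the first `k` positions,
so the identity says that `uStat` at `k + 1` is the average of its leave-one-out values at `k`. -/
theorem succ_mul_uStat_succ (hk : 2 ≤ k) (hkn : k < n) (σ : Perm (Fin n)) :
    (k + 1 : ℝ) * uStat n x (k + 1) σ
      = ∑ t ∈ initSeg n (k + 1), uStat n x k (σ * swap t ⟨k, hkn⟩) := by
  set S := ∑ i ∈ initSeg n (k + 1), x (σ i) with hS
  set T := ∑ i ∈ initSeg n (k + 1), x (σ i) ^ 2 with hT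
  have hk' : (2 : ℝ) ≤ k := by exact_mod_cast hk
  have hn' : (k : ℝ) + 1 ≤ n := by exact_mod_cast hkn
  have hn1 : (n : ℝ) - 1 ≠ 0 := by linarith
  have hk1 : (k : ℝ) - 1 ≠ 0 := by linarith
  have hsummand : ∀ t ∈ initSeg n (k + 1), uStat n x k (σ * swap t ⟨k, hkn⟩)
      = (S ^ 2 - (n - k) / (n - 1) * T) / (k * (k - 1)) - 2 * S / (k * (k - 1)) * x (σ t)
        + (1 + (n - k) / (n - 1)) / (k * (k - 1)) * x (σ t) ^ 2 := by
    intro t ht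
    simp only [uStat, Perm.mul_apply, sum_initSeg_comp_swap hkn ht (fun i => x (σ i)),
      sum_initSeg_comp_swap hkn ht (fun i => x (σ i) ^ 2)]
    ring
  have hU : uStat n x (k + 1) σ = (S ^ 2 - ((n - (k + 1)) / (n - 1)) * T) / ((k + 1) * k) := by
    simp only [uStat, S, T]
    push_cast
    ring
  rw [sum_congr rfl hsummand, sum_add_distrib, sum_sub_distrib, sum_const, ← mul_sum, ← mul_sum,
    ← hS, ← hT, card_initSeg hkn, nsmul_eq_mul, hU]
  push_cast
  field_simp
  ring

theorem isReverseSubmartingale_abs_uStat (n : ℕ) (x : Fin n → ℝ) :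
    IsReverseSubmartingale (tailSigma n) (fun k σ => |uStat n x k σ|) 2 n := by
  intro k hk hkn W hW hW0
  have hk0 : (0 : ℝ) < k + 1 := by positivity
  refine le_of_mul_le_mul_left ?_ hk0
  rw [mul_sum, mul_sum]
  calc ∑ σ, (k + 1 : ℝ) * (|uStat n x (k + 1) σ| * W σ)
      ≤ ∑ σ, ∑ t ∈ initSeg n (k + 1), |uStat n x k (σ * swap t ⟨k, hkn⟩)| * W σ := by
        refine sum_le_sum fun σ _ => ?_
        rw [← mul_assoc, ← sum_mul, ← abs_of_pos hk0, ← abs_mul, succ_mul_uStat_succ hk hkn]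
        exact mul_le_mul_of_nonneg_right (abs_sum_le_sum_abs _ _) (hW0 σ)
    _ = ∑ t ∈ initSeg n (k + 1), ∑ σ,
          |uStat n x k (σ * swap t ⟨k, hkn⟩)| * W (σ * swap t ⟨k, hkn⟩) := by
        rw [sum_comm]
        refine sum_congr rfl fun t ht => sum_congr rfl fun σ _ => ?_
        rw [measurable_tailSigma_iff.mp hW _ (swap_mem_fixingTail hkn ht)]
    _ = ∑ t ∈ initSeg n (k + 1), ∑ σ, |uStat n x k σ| * W σ :=
        sum_congr rfl fun t _ =>
          Equiv.sum_comp (Equiv.mulRight (swap t ⟨k, hkn⟩)) fun σ => |uStat n x k σ| * W σ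
    _ = ∑ σ, (k + 1 : ℝ) * (|uStat n x k σ| * W σ) := by
        rw [sum_const, card_initSeg hkn, nsmul_eq_mul, mul_sum]
        push_cast
        rfl

lemma sum_offDiag_pairKernel_sq (hx : ∑ i, x i = 0) (u : ℝ) :
    ∑ p ∈ univ.offDiag, pairKernel u (x p.1) (x p.2) ^ 2
      = (1 + 2 * u ^ 2) * (∑ i, x i ^ 2) ^ 2
        + (2 * n * u ^ 2 - (1 + 2 * u) ^ 2) * ∑ i, x i ^ 4 := by
  have hsplit := sum_union (disjoint_diag_offDiag (univ : Finset (Fin n)))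
    (f := fun p => pairKernel u (x p.1) (x p.2) ^ 2)
  rw [diag_union_offDiag, univ_product_univ, Fintype.sum_prod_type, sum_diag] at hsplit
  have h (a b : Fin n) : pairKernel u (x a) (x b) ^ 2
      = (1 + 2 * u ^ 2) * x a ^ 2 * x b ^ 2 + 2 * u * x a ^ 3 * x b + 2 * u * x a * x b ^ 3
        + u ^ 2 * x a ^ 4 + u ^ 2 * x b ^ 4 := by
    rw [pairKernel]; ring
  have hfull : ∑ a, ∑ b, pairKernel u (x a) (x b) ^ 2
      = (1 + 2 * u ^ 2) * (∑ i, x i ^ 2) ^ 2 + 2 * n * u ^ 2 * ∑ i, x i ^ 4 := by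
    simp only [h, sum_add_distrib, ← mul_sum, ← sum_mul, hx, sum_const, card_univ,
      Fintype.card_fin, nsmul_eq_mul]
    ring
  have hdiag : ∑ a, pairKernel u (x a) (x a) ^ 2 = (1 + 2 * u) ^ 2 * ∑ i, x i ^ 4 := by
    rw [mul_sum]; exact sum_congr rfl fun a _ => by rw [pairKernel]; ring
  rw [hfull, hdiag] at hsplit
  linarith

lemma sum_offDiag_pairKernel_sq_le (hn : 2 ≤ n) (hx : ∑ i, x i = 0) :
    ∑ p ∈ univ.offDiag, pairKernel (2 * ((n : ℝ) - 1))⁻¹ (x p.1) (x p.2) ^ 2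
      ≤ n * ((∑ i, x i ^ 2) ^ 2 - ∑ i, x i ^ 4) / ((n : ℝ) - 1) := by
  have hn' : (2 : ℝ) ≤ n := by exact_mod_cast hn
  have hn1 : (n : ℝ) - 1 ≠ 0 := by linarith
  have hs4 : 0 ≤ ∑ i, x i ^ 4 := sum_nonneg fun i _ => by positivity
  rw [sum_offDiag_pairKernel_sq hx, ← sub_nonneg]
  have key : n * ((∑ i, x i ^ 2) ^ 2 - ∑ i, x i ^ 4) / ((n : ℝ) - 1)
      - ((1 + 2 * (2 * ((n : ℝ) - 1))⁻¹ ^ 2) * (∑ i, x i ^ 2) ^ 2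
        + (2 * n * (2 * ((n : ℝ) - 1))⁻¹ ^ 2 - (1 + 2 * (2 * ((n : ℝ) - 1))⁻¹) ^ 2)
          * ∑ i, x i ^ 4)
      = ((2 * n - 3) * (∑ i, x i ^ 2) ^ 2 + n * ∑ i, x i ^ 4) / (2 * ((n : ℝ) - 1) ^ 2) := by
    field_simp; ring
  rw [key]
  apply div_nonneg _ (by positivity)
  nlinarith [sq_nonneg (∑ i, x i ^ 2)]

lemma sum_sq_uStat_two_le (hn : 2 ≤ n) (hx : ∑ i, x i = 0) :
    ∑ σ, uStat n x 2 σ ^ 2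
      ≤ n.factorial * (((∑ i, x i ^ 2) ^ 2 - ∑ i, x i ^ 4) / ((n : ℝ) - 1) ^ 2) := by
  have hcount := card_offDiag_smul_sum_perm_apply_apply
    (fun a b => pairKernel (2 * ((n : ℝ) - 1))⁻¹ (x a) (x b) ^ 2)
    (i := ⟨0, by omega⟩) (j := ⟨1, by omega⟩) (by simp [Fin.ext_iff])
  rw [offDiag_card, card_univ, Fintype.card_fin, nsmul_eq_mul, nsmul_eq_mul,
    Nat.cast_sub (Nat.le_mul_self n), Nat.cast_mul] at hcount
  have hn' : (2 : ℝ) ≤ n := by exact_mod_cast hn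
  have hn1 : (n : ℝ) - 1 ≠ 0 := by linarith
  have hpos : (0 : ℝ) < n * n - n := by nlinarith
  simp only [uStat_two hn]
  refine le_of_mul_le_mul_left ?_ hpos
  rw [hcount]
  calc (n.factorial : ℝ) * ∑ p ∈ univ.offDiag, pairKernel (2 * ((n : ℝ) - 1))⁻¹ (x p.1) (x p.2) ^ 2
      ≤ n.factorial * (n * ((∑ i, x i ^ 2) ^ 2 - ∑ i, x i ^ 4) / ((n : ℝ) - 1)) := by
        gcongr; exact sum_offDiag_pairKernel_sq_le hn hx
    _ = (n * n - n)
          * (n.factorial * (((∑ i, x i ^ 2) ^ 2 - ∑ i, x i ^ 4) / ((n : ℝ) - 1) ^ 2)) := by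
        field_simp

end UStatistic

theorem statement13 (n : ℕ) (hn : 2 ≤ n) (x : Fin n → ℝ) (hx : ∑ i, x i = 0) :
    (1 / (Nat.factorial n : ℝ)) * ∑ σ : Equiv.Perm (Fin n),
        (Finset.Icc 2 n).sup' (Finset.nonempty_Icc.mpr hn)
          (fun k =>
            |((∑ i ∈ Finset.univ.filter fun i : Fin n => (i : ℕ) < k, x (σ i)) ^ 2
                - (((n : ℝ) - k) / ((n : ℝ) - 1)) *
                  ∑ i ∈ Finset.univ.filter fun i : Fin n => (i : ℕ) < k, (x (σ i)) ^ 2)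
              / ((k : ℝ) * ((k : ℝ) - 1))| ^ 2)
      ≤ (4 / ((n : ℝ) - 1) ^ 2) * ((∑ i, (x i) ^ 2) ^ 2 - ∑ i, (x i) ^ 4) := by
  have hdoob := (isReverseSubmartingale_abs_uStat n x).sum_sup'_sq_le antitone_tailSigma
    (fun k => continuous_abs.measurable.comp (measurable_uStat k)) (fun _ _ => abs_nonneg _)
    (by ext σ; simp [uStat_self hx]) hn
  calc (1 / (n.factorial : ℝ)) * ∑ σ, (Icc 2 n).sup' (nonempty_Icc.mpr hn)
        (fun k => |uStat n x k σ| ^ 2)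
      ≤ (1 / (n.factorial : ℝ)) * (4 * (n.factorial
          * (((∑ i, x i ^ 2) ^ 2 - ∑ i, x i ^ 4) / ((n : ℝ) - 1) ^ 2))) := by
        gcongr
        simp only [sq_abs] at hdoob ⊢
        exact hdoob.trans (by gcongr; exact sum_sq_uStat_two_le hn hx)
    _ = (4 / ((n : ℝ) - 1) ^ 2) * ((∑ i, x i ^ 2) ^ 2 - ∑ i, x i ^ 4) := by
        field_simp

end
end
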